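/- If C is a chordal clutter with maximum circuit cardinality k, then the independence complex I(C) is (k−2)-decomposable (and hence shellable). -/
import Mathlib


variable {ι : Type*} [DecidableEq ι]

/-- A clutter: an antichain of finite sets (no circuit properly contains another). -/
def IsClutter (C : Set (Finset ι)) : Prop :=
  ∀ e₁ ∈ C, ∀ e₂ ∈ C, e₁ ⊆ e₂ → e₁ = e₂

/-- The independence complex of the clutter with circuit set `C` on ground set `V`:
faces are the subsets of `V` containing no circuit. -/
def indepOn (V : Finset ι) (C : Set (Finset ι)) : Set (Finset ι) :=
  {σ | σ ⊆ V ∧ ∀ e ∈ C, ¬ e ⊆ σ}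

/-- The minimal members of a family of finite sets. -/
def minimalSets (S : Set (Finset ι)) : Set (Finset ι) :=
  {e | e ∈ S ∧ ∀ f ∈ S, f ⊆ e → f = e}

/-- Deletion of a vertex from a clutter: keep the circuits avoiding `v`. -/
def clDel (C : Set (Finset ι)) (v : ι) : Set (Finset ι) :=
  {e | e ∈ C ∧ v ∉ e}

/-- Contraction of a vertex in a clutter: minimal sets among `{e \ {v}}`. -/
def clCon (C : Set (Finset ι)) (v : ι) : Set (Finset ι) :=
  minimalSets ((fun e => e.erase v) '' C)

/-- A simplicial complex: a family of finite sets closed under taking subsets. -/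
def IsComplex (Δ : Set (Finset ι)) : Prop :=
  ∀ σ ∈ Δ, ∀ τ, τ ⊆ σ → τ ∈ Δ

/-- The link of a face `σ`. -/
def link (Δ : Set (Finset ι)) (σ : Finset ι) : Set (Finset ι) :=
  {τ | Disjoint τ σ ∧ τ ∪ σ ∈ Δ}

/-- The face-deletion `Δ \ σ`: faces of `Δ` not containing `σ`. -/
def delFace (Δ : Set (Finset ι)) (σ : Finset ι) : Set (Finset ι) :=
  {τ | τ ∈ Δ ∧ ¬ σ ⊆ τ}

/-- The star of a face `σ`, as a subcomplex. -/
def starC (Δ : Set (Finset ι)) (σ : Finset ι) : Set (Finset ι) :=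
  {τ | τ ∈ Δ ∧ τ ∪ σ ∈ Δ}

/-- A facet: a maximal face. -/
def IsFacet (Δ : Set (Finset ι)) (σ : Finset ι) : Prop :=
  σ ∈ Δ ∧ ∀ τ ∈ Δ, σ ⊆ τ → σ = τ

/-- A shedding face: every face `τ` of the star of `σ` satisfies the exchange property:
for every `v ∈ σ` there is `w ∉ τ` with `(τ ∪ {w}) \ {v}` a face. -/
def SheddingFace (Δ : Set (Finset ι)) (σ : Finset ι) : Prop :=
  ∀ τ ∈ Δ, σ ⊆ τ → ∀ v ∈ σ, ∃ w, w ∉ τ ∧ (insert w τ).erase v ∈ Δ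

/-- Shellability (Björner–Wachs form): an ordering `f 0, f 1, …` of the facets such
that for all `i < j` there are `k < j` and `x ∈ f j` with
`f i ∩ f j ⊆ f k ∩ f j = f j \ {x}`. -/
def Shellable (Δ : Set (Finset ι)) : Prop :=
  ∃ (m : ℕ) (f : Fin m → Finset ι),
    Function.Injective f ∧
    (∀ σ, IsFacet Δ σ ↔ ∃ i, f i = σ) ∧
    ∀ i j : Fin m, i < j →
      ∃ k, k < j ∧ ∃ x ∈ f j, f i ∩ f j ⊆ f k ∩ f j ∧ f k ∩ f j = (f j).erase x

/-- `k`-decomposability (for possibly non-pure complexes): a complex is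
`k`-decomposable if it is a simplex (or degenerate), or has a shedding face of
dimension at most `k` whose deletion and link are both `k`-decomposable. -/
inductive KDecomposable : ℤ → Set (Finset ι) → Prop
  | of_empty (k : ℤ) : KDecomposable k ∅
  | of_simplex (k : ℤ) (σ : Finset ι) : KDecomposable k {τ | τ ⊆ σ}
  | of_shed (k : ℤ) (Δ : Set (Finset ι)) (σ : Finset ι) (hσ : σ ∈ Δ)
      (hne : σ.Nonempty) (hdim : (σ.card : ℤ) ≤ k + 1)
      (hshed : SheddingFace Δ σ)
      (h₁ : KDecomposable k (delFace Δ σ)) (h₂ : KDecomposable k (link Δ σ)) :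
      KDecomposable k Δ

/-- A simplicial vertex of a clutter: any two distinct circuits `e₁, e₂` containing `v`
admit a third circuit `e₃ ⊆ (e₁ ∪ e₂) \ {v}`. -/
def SimplicialVertex (C : Set (Finset ι)) (v : ι) : Prop :=
  ∀ e₁ ∈ C, ∀ e₂ ∈ C, e₁ ≠ e₂ → v ∈ e₁ → v ∈ e₂ →
    ∃ e₃ ∈ C, e₃ ⊆ (e₁ ∪ e₂).erase v

/-- Minors of a clutter (with ground set): obtained by repeated deletions and contractions. -/
inductive Minor : Finset ι → Set (Finset ι) → Finset ι → Set (Finset ι) → Prop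
  | refl (V : Finset ι) (C : Set (Finset ι)) : Minor V C V C
  | del {V C W D} (v : ι) (hv : v ∈ W) (h : Minor V C W D) :
      Minor V C (W.erase v) (clDel D v)
  | con {V C W D} (v : ι) (hv : v ∈ W) (h : Minor V C W D) :
      Minor V C (W.erase v) (clCon D v)

/-- Contractions of a clutter (with ground set): obtained by repeated contractions. -/
inductive ConMinor : Finset ι → Set (Finset ι) → Finset ι → Set (Finset ι) → Prop
  | refl (V : Finset ι) (C : Set (Finset ι)) : ConMinor V C V C
  | con {V C W D} (v : ι) (hv : v ∈ W) (h : ConMinor V C W D) :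
      ConMinor V C (W.erase v) (clCon D v)

/-- A clutter is chordal if every minor with at least one vertex has a simplicial vertex. -/
def Chordal (V : Finset ι) (C : Set (Finset ι)) : Prop :=
  ∀ W D, Minor V C W D → W.Nonempty → ∃ v ∈ W, SimplicialVertex D v

/-- Clutter of minimal non-faces of a complex `Δ` on ground set `V`. -/
def nonfaceClutter (V : Finset ι) (Δ : Set (Finset ι)) : Set (Finset ι) :=
  {e | e ⊆ V ∧ e ∉ Δ ∧ ∀ e', e' ⊂ e → e' ∈ Δ}

/-- `cNon V C d`: the `d`-non-circuits of `C`, i.e. the `d`-subsets of `V`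
that are not circuits of `C`. -/
def cNon (V : Finset ι) (C : Set (Finset ι)) (d : ℕ) : Set (Finset ι) :=
  {e | e ⊆ V ∧ e.card = d ∧ e ∉ C}

/-- Combinatorial Alexander dual of a complex on ground set `V`. -/
def alexDual (V : Finset ι) (Δ : Set (Finset ι)) : Set (Finset ι) :=
  {σ | σ ⊆ V ∧ V \ σ ∉ Δ}

/-- Join of two complexes. -/
def joinC (Δ₁ Δ₂ : Set (Finset ι)) : Set (Finset ι) :=
  {σ | ∃ σ₁ ∈ Δ₁, ∃ σ₂ ∈ Δ₂, σ = σ₁ ∪ σ₂}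

/-! ### Auxiliary lemmas -/

lemma exists_minimal_subset (S : Set (Finset ι)) :
    ∀ x ∈ S, ∃ y ∈ minimalSets S, y ⊆ x := by
  intro x
  induction x using Finset.strongInductionOn with
  | _ x ih =>
    intro hx
    by_cases h : ∀ f ∈ S, f ⊆ x → f = x
    · exact ⟨x, ⟨hx, h⟩, subset_rfl⟩
    · push_neg at h
      obtain ⟨f, hf, hfx, hne⟩ := h
      obtain ⟨y, hy, hyf⟩ := ih f (HasSubset.Subset.ssubset_of_ne hfx hne) hf
      exact ⟨y, hy, hyf.trans hfx⟩

lemma isClutter_minimalSets (S : Set (Finset ι)) : IsClutter (minimalSets S) :=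
  fun e₁ h₁ e₂ h₂ hsub => h₂.2 e₁ h₁.1 hsub

lemma minimalSets_eq_self {S : Set (Finset ι)} (h : IsClutter S) : minimalSets S = S := by
  ext e
  exact ⟨fun he => he.1, fun he => ⟨he, fun f hf hsub => h f hf e he hsub⟩⟩

lemma isClutter_clDel {D : Set (Finset ι)} (h : IsClutter D) (v : ι) : IsClutter (clDel D v) :=
  fun e₁ h₁ e₂ h₂ hsub => h e₁ h₁.1 e₂ h₂.1 hsub

lemma isClutter_clCon (D : Set (Finset ι)) (v : ι) : IsClutter (clCon D v) :=
  isClutter_minimalSets _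

lemma clCon_minimalSets (u : ι) (S : Set (Finset ι)) :
    clCon (minimalSets S) u = minimalSets ((fun e => e.erase u) '' S) := by
  unfold clCon
  ext x
  constructor
  · rintro ⟨⟨f, hf, rfl⟩, hmin⟩
    refine ⟨⟨f, hf.1, rfl⟩, ?_⟩
    rintro y ⟨g, hg, rfl⟩ hsub
    obtain ⟨h, hh, hhg⟩ := exists_minimal_subset S g hg
    have h1 : h.erase u ⊆ f.erase u := (Finset.erase_subset_erase u hhg).trans hsub
    have h2 : h.erase u = f.erase u := hmin _ ⟨h, hh, rfl⟩ h1
    have h3 : f.erase u ⊆ g.erase u := by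
      rw [← h2]; exact Finset.erase_subset_erase u hhg
    exact subset_antisymm hsub h3
  · rintro ⟨⟨f, hf, rfl⟩, hmin⟩
    obtain ⟨h, hh, hhf⟩ := exists_minimal_subset S f hf
    have h1 : h.erase u = f.erase u := hmin _ ⟨h, hh.1, rfl⟩ (Finset.erase_subset_erase u hhf)
    refine ⟨⟨h, hh, h1⟩, ?_⟩
    rintro y ⟨g, hg, rfl⟩ hsub
    exact hmin _ ⟨g, hg.1, rfl⟩ hsub

lemma forb_iff (E : Set (Finset ι)) (s τ : Finset ι) :
    (∀ g ∈ minimalSets ((fun f => f \ s) '' E), ¬ g ⊆ τ) ↔ (∀ f ∈ E, ¬ f \ s ⊆ τ) := by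
  constructor
  · intro h f hf hsub
    obtain ⟨y, hy, hysub⟩ := exists_minimal_subset ((fun f => f \ s) '' E) (f \ s) ⟨f, hf, rfl⟩
    exact h y hy (hysub.trans hsub)
  · rintro h g ⟨⟨f, hf, rfl⟩, -⟩ hsub
    exact h f hf hsub

lemma minor_sdiff {W : Finset ι} {D : Set (Finset ι)} (hD : IsClutter D) {v : ι} (hv : v ∈ W) :
    ∀ s : Finset ι, s ⊆ W.erase v →
      Minor W D ((W.erase v) \ s) (minimalSets ((fun f => f \ s) '' clDel D v)) := by
  intro s
  induction s using Finset.induction_on with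
  | empty =>
    intro _
    have h1 : (W.erase v) \ (∅ : Finset ι) = W.erase v := Finset.sdiff_empty
    have h2 : minimalSets ((fun f : Finset ι => f \ (∅ : Finset ι)) '' clDel D v) = clDel D v := by
      have himg : (fun f : Finset ι => f \ (∅ : Finset ι)) '' clDel D v = clDel D v := by
        have : (fun f : Finset ι => f \ (∅ : Finset ι)) = id := by
          funext f; simp
        rw [this, Set.image_id]
      rw [himg, minimalSets_eq_self (isClutter_clDel hD v)]
    rw [h1, h2]
    exact Minor.del v hv (Minor.refl W D)
  | @insert u s hus ih =>
    intro hsub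
    have hu : u ∈ (W.erase v) \ s :=
      Finset.mem_sdiff.mpr ⟨hsub (Finset.mem_insert_self u s), hus⟩
    have h := Minor.con u hu (ih (fun a ha => hsub (Finset.mem_insert_of_mem ha)))
    have hg : ((W.erase v) \ s).erase u = (W.erase v) \ insert u s := by
      ext a
      simp only [Finset.mem_erase, Finset.mem_sdiff, Finset.mem_insert]
      tauto
    have hc : clCon (minimalSets ((fun f => f \ s) '' clDel D v)) u
        = minimalSets ((fun f => f \ insert u s) '' clDel D v) := by
      rw [clCon_minimalSets, Set.image_image]
      have : (fun f : Finset ι => (f \ s).erase u) = fun f => f \ insert u s := by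
        funext f; ext a
        simp only [Finset.mem_erase, Finset.mem_sdiff, Finset.mem_insert]
        tauto
      rw [this]
    rw [hg, hc] at h
    exact h

lemma minor_trans {V W X : Finset ι} {C D E : Set (Finset ι)}
    (h1 : Minor V C W D) (h2 : Minor W D X E) : Minor V C X E := by
  induction h2 with
  | refl => exact h1
  | del v hv h ih => exact Minor.del v hv ih
  | con v hv h ih => exact Minor.con v hv ih

lemma chordal_minor {V W : Finset ι} {C D : Set (Finset ι)}
    (h : Chordal V C) (hm : Minor V C W D) : Chordal W D :=
  fun X E hm2 hne => h X E (minor_trans hm hm2) hne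

/-! ### Cones -/

def coneV (v : ι) (Γ : Set (Finset ι)) : Set (Finset ι) := {τ | τ.erase v ∈ Γ}

lemma erase_union_right {v : ι} {σ : Finset ι} (h : v ∉ σ) (τ : Finset ι) :
    (τ ∪ σ).erase v = τ.erase v ∪ σ := by
  ext a
  simp only [Finset.mem_erase, Finset.mem_union]
  constructor
  · rintro ⟨hav, hh | hh⟩
    · exact Or.inl ⟨hav, hh⟩
    · exact Or.inr hh
  · rintro (⟨hav, hh⟩ | hh)
    · exact ⟨hav, Or.inl hh⟩
    · exact ⟨fun he => h (he ▸ hh), Or.inr hh⟩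

lemma kdec_cone (v : ι) {k : ℤ} :
    ∀ {Γ : Set (Finset ι)}, KDecomposable k Γ → (∀ τ ∈ Γ, v ∉ τ) →
      KDecomposable k (coneV v Γ) := by
  intro Γ h
  induction h with
  | of_empty =>
    intro _
    have : coneV v (∅ : Set (Finset ι)) = ∅ := by ext τ; simp [coneV]
    rw [this]; exact KDecomposable.of_empty _
  | of_simplex σ =>
    intro _
    have : coneV v {τ : Finset ι | τ ⊆ σ} = {τ | τ ⊆ insert v σ} := by
      ext τ
      simp only [coneV, Set.mem_setOf_eq, Finset.subset_insert_iff]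
    rw [this]; exact KDecomposable.of_simplex _ (insert v σ)
  | of_shed Δ σ hσ hne hdim hshed h₁ h₂ ih₁ ih₂ =>
    intro hv
    have hvσ : v ∉ σ := hv σ hσ
    have hσc : σ ∈ coneV v Δ := by
      show σ.erase v ∈ Δ
      rwa [Finset.erase_eq_of_notMem hvσ]
    refine KDecomposable.of_shed _ _ σ hσc hne hdim ?_ ?_ ?_
    · -- shedding
      intro τ hτ hστ u hu
      have huv : u ≠ v := fun h => hvσ (h ▸ hu)
      have hστ' : σ ⊆ τ.erase v := Finset.subset_erase.mpr ⟨hστ, hvσ⟩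
      obtain ⟨w, hw, hw2⟩ := hshed (τ.erase v) hτ hστ' u hu
      have hwv : w ≠ v := by
        intro hh; subst hh
        exact hv _ hw2 (Finset.mem_erase.mpr ⟨Ne.symm huv, Finset.mem_insert_self w _⟩)
      refine ⟨w, ?_, ?_⟩
      · intro hwτ
        exact hw (Finset.mem_erase.mpr ⟨hwv, hwτ⟩)
      · show ((insert w τ).erase u).erase v ∈ Δ
        have heq : ((insert w τ).erase u).erase v = (insert w (τ.erase v)).erase u := by
          ext a
          simp only [Finset.mem_erase, Finset.mem_insert]
          constructor
          · rintro ⟨hav, hau, hh⟩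
            exact ⟨hau, hh.imp id (fun ht => ⟨hav, ht⟩)⟩
          · rintro ⟨hau, hh⟩
            rcases hh with rfl | ⟨hav, ht⟩
            · exact ⟨hwv, hau, Or.inl rfl⟩
            · exact ⟨hav, hau, Or.inr ht⟩
        rw [heq]; exact hw2
    · -- deletion
      have heq : delFace (coneV v Δ) σ = coneV v (delFace Δ σ) := by
        ext τ
        simp only [delFace, coneV, Set.mem_setOf_eq]
        constructor
        · rintro ⟨h1, h2⟩
          exact ⟨h1, fun hs => h2 (hs.trans (Finset.erase_subset v τ))⟩
        · rintro ⟨h1, h2⟩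
          exact ⟨h1, fun hs => h2 (Finset.subset_erase.mpr ⟨hs, hvσ⟩)⟩
      rw [heq]
      exact ih₁ (fun τ hτ => hv τ hτ.1)
    · -- link
      have heq : link (coneV v Δ) σ = coneV v (link Δ σ) := by
        ext τ
        simp only [link, coneV, Set.mem_setOf_eq]
        constructor
        · rintro ⟨hd, hu⟩
          refine ⟨Finset.disjoint_of_subset_left (Finset.erase_subset v τ) hd, ?_⟩
          rw [← erase_union_right hvσ τ]
          exact hu
        · rintro ⟨hd, hu⟩
          constructor
          · rw [Finset.disjoint_left]
            intro a ha haσ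
            have hav : a ≠ v := fun hh => hvσ (hh ▸ haσ)
            exact (Finset.disjoint_left.mp hd (Finset.mem_erase.mpr ⟨hav, ha⟩)) haσ
          · show (τ ∪ σ).erase v ∈ Δ
            rw [erase_union_right hvσ τ]
            exact hu
      rw [heq]
      exact ih₂ (fun τ hτ hvτ => hv _ hτ.2 (Finset.mem_union_left σ hvτ))

/-! ### Independence complexes of clutters -/

lemma isComplex_indepOn (V : Finset ι) (C : Set (Finset ι)) : IsComplex (indepOn V C) :=
  fun σ hσ τ hτ => ⟨hτ.trans hσ.1, fun e he hsub => hσ.2 e he (hsub.trans hτ)⟩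

lemma indep_empty_of_empty_mem {W : Finset ι} {D : Set (Finset ι)} (h : (∅ : Finset ι) ∈ D) :
    indepOn W D = ∅ := by
  ext τ
  simp only [indepOn, Set.mem_setOf_eq, Set.mem_empty_iff_false, iff_false, not_and]
  intro _ h2
  exact h2 ∅ h (Finset.empty_subset τ)

lemma indep_ground_empty {D : Set (Finset ι)} (hemp0 : (∅ : Finset ι) ∉ D) :
    indepOn (∅ : Finset ι) D = {τ | τ ⊆ (∅ : Finset ι)} := by
  ext τ
  simp only [indepOn, Set.mem_setOf_eq]
  constructor
  · rintro ⟨h1, -⟩; exact h1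
  · intro h1
    refine ⟨h1, fun e he hsub => hemp0 ?_⟩
    have : e = ∅ := Finset.subset_empty.mp (hsub.trans h1)
    rwa [this] at he

lemma indep_del_singleton {W : Finset ι} {D : Set (Finset ι)} {v : ι} (hv : v ∈ W)
    (hsing : ({v} : Finset ι) ∈ D) : indepOn W D = indepOn (W.erase v) (clDel D v) := by
  ext τ
  constructor
  · rintro ⟨h1, h2⟩
    have hvτ : v ∉ τ := fun h => h2 {v} hsing (Finset.singleton_subset_iff.mpr h)
    exact ⟨Finset.subset_erase.mpr ⟨h1, hvτ⟩, fun e he => h2 e he.1⟩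
  · rintro ⟨h1, h2⟩
    have hvτ : v ∉ τ := fun h => (Finset.mem_erase.mp (h1 h)).1 rfl
    refine ⟨h1.trans (Finset.erase_subset v W), fun e he hsub => ?_⟩
    by_cases hve : v ∈ e
    · exact hvτ (hsub hve)
    · exact h2 e ⟨he, hve⟩ hsub

lemma inner_terminal [Fintype ι] {k : ℕ} {W : Finset ι} {D : Set (Finset ι)} {v : ι}
    (hclut : IsClutter D) (hDW : ∀ e ∈ D, e ⊆ W) (hch : Chordal W D)
    (hk : ∀ e ∈ D, e.card ≤ k) (hv : v ∈ W)
    (IH : ∀ (W' : Finset ι) (D' : Set (Finset ι)), W'.card < W.card → IsClutter D' → (∀ e ∈ D', e ⊆ W') → Chordal W' D' →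
      (∀ e ∈ D', e.card ≤ k) → KDecomposable ((k : ℤ) - 2) (indepOn W' D'))
    (S : Finset (Finset ι)) (hS : ∀ e ∈ S, e ∈ D ∧ v ∈ e)
    (hterm : ∀ e ∈ D, v ∈ e → e ∈ S) :
    KDecomposable ((k : ℤ) - 2) {τ | τ ∈ indepOn W D ∧ ∀ e ∈ S, ¬ e.erase v ⊆ τ} := by
  have heq : {τ | τ ∈ indepOn W D ∧ ∀ e ∈ S, ¬ e.erase v ⊆ τ}
      = coneV v (indepOn (W.erase v) (clCon D v)) := by
    ext τ
    simp only [Set.mem_setOf_eq, coneV, indepOn]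
    constructor
    · rintro ⟨⟨hW, hcirc⟩, hScond⟩
      refine ⟨Finset.erase_subset_erase v hW, ?_⟩
      rintro g ⟨⟨f, hf, rfl⟩, -⟩ hsub
      by_cases hvf : v ∈ f
      · exact hScond f (hterm f hf hvf) (hsub.trans (Finset.erase_subset v τ))
      · apply hcirc f hf
        intro a haf
        have haf' : a ∈ f.erase v := Finset.mem_erase.mpr ⟨fun hh => hvf (hh ▸ haf), haf⟩
        exact Finset.mem_of_mem_erase (hsub haf')
    · rintro ⟨h1, h2⟩
      refine ⟨⟨?_, ?_⟩, ?_⟩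
      · intro a ha
        by_cases hav : a = v
        · exact hav ▸ hv
        · exact Finset.mem_of_mem_erase (h1 (Finset.mem_erase.mpr ⟨hav, ha⟩))
      · intro f hf hsub
        obtain ⟨y, hy, hysub⟩ := exists_minimal_subset ((fun e => e.erase v) '' D) (f.erase v) ⟨f, hf, rfl⟩
        exact h2 y hy (hysub.trans (Finset.erase_subset_erase v hsub))
      · intro e he hsub
        obtain ⟨heD, _⟩ := hS e he
        have hsub' : e.erase v ⊆ τ.erase v :=
          Finset.subset_erase.mpr ⟨hsub, Finset.notMem_erase v e⟩
        obtain ⟨y, hy, hysub⟩ := exists_minimal_subset ((fun e => e.erase v) '' D) (e.erase v) ⟨e, heD, rfl⟩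
        exact h2 y hy (hysub.trans hsub')
  rw [heq]
  refine kdec_cone v ?_ ?_
  · refine IH (W.erase v) (clCon D v) (Finset.card_erase_lt_of_mem hv)
      (isClutter_clCon D v) ?_ (chordal_minor hch (Minor.con v hv (Minor.refl W D))) ?_
    · rintro g ⟨⟨f, hf, rfl⟩, -⟩
      exact Finset.erase_subset_erase v (hDW f hf)
    · rintro g ⟨⟨f, hf, rfl⟩, -⟩
      exact (Finset.card_le_card (Finset.erase_subset v f)).trans (hk f hf)
  · intro τ hτ hvτ
    exact Finset.notMem_erase v W (hτ.1 hvτ)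

lemma inner_main [Fintype ι] {k : ℕ} {W : Finset ι} {D : Set (Finset ι)} {v : ι}
    (hclut : IsClutter D) (hDW : ∀ e ∈ D, e ⊆ W) (hch : Chordal W D)
    (hk : ∀ e ∈ D, e.card ≤ k) (hv : v ∈ W) (hsimp : SimplicialVertex D v)
    (hsing : ({v} : Finset ι) ∉ D) (hemp : (∅ : Finset ι) ∉ D)
    (IH : ∀ (W' : Finset ι) (D' : Set (Finset ι)), W'.card < W.card → IsClutter D' → (∀ e ∈ D', e ⊆ W') → Chordal W' D' →
      (∀ e ∈ D', e.card ≤ k) → KDecomposable ((k : ℤ) - 2) (indepOn W' D')) :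
    ∀ (m : ℕ) (S : Finset (Finset ι)), (∀ e ∈ S, e ∈ D ∧ v ∈ e) →
      ((Set.toFinite {e | e ∈ D ∧ v ∈ e}).toFinset \ S).card ≤ m →
      KDecomposable ((k : ℤ) - 2) {τ | τ ∈ indepOn W D ∧ ∀ e ∈ S, ¬ e.erase v ⊆ τ} := by
  intro m
  induction m with
  | zero =>
    intro S hS hcard
    by_cases hterm : ∀ e ∈ D, v ∈ e → e ∈ S
    · exact inner_terminal hclut hDW hch hk hv IH S hS hterm
    · exfalso
      push_neg at hterm
      obtain ⟨e, he, hve, heS⟩ := hterm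
      have hmem : e ∈ (Set.toFinite {e | e ∈ D ∧ v ∈ e}).toFinset \ S :=
        Finset.mem_sdiff.mpr ⟨(Set.Finite.mem_toFinset _).mpr ⟨he, hve⟩, heS⟩
      have := Finset.card_pos.mpr ⟨e, hmem⟩
      omega
  | succ m ihm =>
    intro S hS hcard
    by_cases hterm : ∀ e ∈ D, v ∈ e → e ∈ S
    · exact inner_terminal hclut hDW hch hk hv IH S hS hterm
    push_neg at hterm
    obtain ⟨e₀, he₀, hve₀, he₀S⟩ := hterm
    -- basic facts about σ = e₀.erase v
    have hσW : e₀.erase v ⊆ W := (Finset.erase_subset v e₀).trans (hDW e₀ he₀)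
    have hvσ : v ∉ e₀.erase v := Finset.notMem_erase v e₀
    have hins : insert v (e₀.erase v) = e₀ := Finset.insert_erase hve₀
    have hne : (e₀.erase v).Nonempty := by
      rw [Finset.nonempty_iff_ne_empty]
      intro h
      apply hsing
      have he : e₀ = {v} := by
        rw [← hins, h]
        simp
      rwa [← he]
    have hσmem : e₀.erase v ∈ {τ | τ ∈ indepOn W D ∧ ∀ e ∈ S, ¬ e.erase v ⊆ τ} := by
      refine ⟨⟨hσW, ?_⟩, ?_⟩
      · intro f hf hsub
        have hfe : f = e₀ := hclut f hf e₀ he₀ (hsub.trans (Finset.erase_subset v e₀))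
        rw [hfe] at hsub
        exact hvσ (hsub hve₀)
      · intro e he hsub
        obtain ⟨heD, hvee⟩ := hS e he
        have hee : e ⊆ e₀ := by
          intro a ha
          by_cases hav : a = v
          · exact hav ▸ hve₀
          · exact (Finset.erase_subset v e₀) (hsub (Finset.mem_erase.mpr ⟨hav, ha⟩))
        have : e = e₀ := hclut e heD e₀ he₀ hee
        exact he₀S (this ▸ he)
    have hdim : ((e₀.erase v).card : ℤ) ≤ ((k : ℤ) - 2) + 1 := by
      have h1 : 1 ≤ e₀.card := Finset.card_pos.mpr ⟨v, hve₀⟩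
      have h2 : (e₀.erase v).card = e₀.card - 1 := Finset.card_erase_of_mem hve₀
      have h3 := hk e₀ he₀
      omega
    have hshed : SheddingFace {τ | τ ∈ indepOn W D ∧ ∀ e ∈ S, ¬ e.erase v ⊆ τ} (e₀.erase v) := by
      intro τ hτ hστ u hu
      obtain ⟨⟨hτW, hτcirc⟩, hτS⟩ := hτ
      have hue₀ : u ∈ e₀ := Finset.mem_of_mem_erase hu
      have huv : u ≠ v := (Finset.mem_erase.mp hu).1
      have hvτ : v ∉ τ := by
        intro hvτ
        apply hτcirc e₀ he₀
        intro a ha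
        by_cases hav : a = v
        · exact hav ▸ hvτ
        · exact hστ (Finset.mem_erase.mpr ⟨hav, ha⟩)
      refine ⟨v, hvτ, ⟨⟨?_, ?_⟩, ?_⟩⟩
      · intro a ha
        obtain ⟨_, ha⟩ := Finset.mem_erase.mp ha
        rcases Finset.mem_insert.mp ha with rfl | h
        · exact hv
        · exact hτW h
      · intro f hf hsub
        by_cases hvf : v ∈ f
        · have hfe : f ≠ e₀ := by
            intro hh; subst hh
            exact (Finset.mem_erase.mp (hsub hue₀)).1 rfl
          obtain ⟨g, hg, hgsub⟩ := hsimp f hf e₀ he₀ hfe hvf hve₀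
          apply hτcirc g hg
          intro a ha
          obtain ⟨hav, ha'⟩ := Finset.mem_erase.mp (hgsub ha)
          rcases Finset.mem_union.mp ha' with haf | hae
          · have h' := hsub haf
            obtain ⟨hau, h'⟩ := Finset.mem_erase.mp h'
            rcases Finset.mem_insert.mp h' with rfl | h
            · exact absurd rfl hav
            · exact h
          · exact hστ (Finset.mem_erase.mpr ⟨hav, hae⟩)
        · apply hτcirc f hf
          intro a ha
          have hav : a ≠ v := fun hh => hvf (hh ▸ ha)
          obtain ⟨hau, h'⟩ := Finset.mem_erase.mp (hsub ha)
          rcases Finset.mem_insert.mp h' with rfl | h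
          · exact absurd rfl hav
          · exact h
      · intro e he hsub
        apply hτS e he
        intro a ha
        have hav := (Finset.mem_erase.mp ha).1
        obtain ⟨hau, h'⟩ := Finset.mem_erase.mp (hsub ha)
        rcases Finset.mem_insert.mp h' with rfl | h
        · exact absurd rfl hav
        · exact h
    have hdel : delFace {τ | τ ∈ indepOn W D ∧ ∀ e ∈ S, ¬ e.erase v ⊆ τ} (e₀.erase v)
        = {τ | τ ∈ indepOn W D ∧ ∀ e ∈ insert e₀ S, ¬ e.erase v ⊆ τ} := by
      ext τ
      simp only [delFace, Set.mem_setOf_eq]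
      constructor
      · rintro ⟨⟨hind, hSc⟩, h3⟩
        refine ⟨hind, ?_⟩
        intro e hee
        rcases Finset.mem_insert.mp hee with rfl | hee
        · exact h3
        · exact hSc e hee
      · rintro ⟨h1, h2⟩
        exact ⟨⟨h1, fun e hee => h2 e (Finset.mem_insert_of_mem hee)⟩,
          h2 e₀ (Finset.mem_insert_self _ _)⟩
    have hlink : link {τ | τ ∈ indepOn W D ∧ ∀ e ∈ S, ¬ e.erase v ⊆ τ} (e₀.erase v)
        = indepOn ((W.erase v) \ e₀.erase v)
            (minimalSets ((fun f => f \ e₀.erase v) '' clDel D v)) := by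
      ext τ
      simp only [link, indepOn, Set.mem_setOf_eq]
      constructor
      · rintro ⟨hdisj, ⟨⟨hsubW, hcirc⟩, -⟩⟩
        have hvτσ : v ∉ τ ∪ e₀.erase v := by
          intro hmem
          apply hcirc e₀ he₀
          intro a ha
          by_cases hav : a = v
          · exact hav ▸ hmem
          · exact Finset.mem_union_right τ (Finset.mem_erase.mpr ⟨hav, ha⟩)
        constructor
        · intro a ha
          refine Finset.mem_sdiff.mpr ⟨Finset.mem_erase.mpr
            ⟨?_, hsubW (Finset.mem_union_left _ ha)⟩, ?_⟩
          · intro hh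
            exact hvτσ (hh ▸ Finset.mem_union_left _ ha)
          · exact Finset.disjoint_left.mp hdisj ha
        · rw [forb_iff]
          intro f hf hsub
          apply hcirc f hf.1
          intro a ha
          by_cases haσ : a ∈ e₀.erase v
          · exact Finset.mem_union_right τ haσ
          · exact Finset.mem_union_left _ (hsub (Finset.mem_sdiff.mpr ⟨ha, haσ⟩))
      · rintro ⟨hsubG, hconds⟩
        rw [forb_iff] at hconds
        have hτW : τ ⊆ W := by
          intro a ha
          exact Finset.mem_of_mem_erase (Finset.mem_sdiff.mp (hsubG ha)).1
        have hvτ : v ∉ τ := fun h =>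
          (Finset.mem_erase.mp (Finset.mem_sdiff.mp (hsubG h)).1).1 rfl
        have hdisj : Disjoint τ (e₀.erase v) := by
          rw [Finset.disjoint_left]
          intro a ha
          exact (Finset.mem_sdiff.mp (hsubG ha)).2
        refine ⟨hdisj, ⟨⟨Finset.union_subset hτW hσW, ?_⟩, ?_⟩⟩
        · intro f hf hsub
          have hvf : v ∉ f := by
            intro hvf
            rcases Finset.mem_union.mp (hsub hvf) with h | h
            · exact hvτ h
            · exact hvσ h
          apply hconds f ⟨hf, hvf⟩
          intro a ha
          obtain ⟨haf, haσ⟩ := Finset.mem_sdiff.mp ha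
          rcases Finset.mem_union.mp (hsub haf) with h | h
          · exact h
          · exact absurd h haσ
        · intro e he hsub
          obtain ⟨heD, hvee⟩ := hS e he
          have hene : e ≠ e₀ := fun h => he₀S (h ▸ he)
          obtain ⟨g, hg, hgsub⟩ := hsimp e heD e₀ he₀ hene hvee hve₀
          have hvg : v ∉ g := fun h => (Finset.mem_erase.mp (hgsub h)).1 rfl
          apply hconds g ⟨hg, hvg⟩
          intro a ha
          obtain ⟨hag, haσ⟩ := Finset.mem_sdiff.mp ha
          obtain ⟨hav, hau⟩ := Finset.mem_erase.mp (hgsub hag)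
          rcases Finset.mem_union.mp hau with h | h
          · have h' := hsub (Finset.mem_erase.mpr ⟨hav, h⟩)
            rcases Finset.mem_union.mp h' with h'' | h''
            · exact h''
            · exact absurd h'' haσ
          · exact absurd (Finset.mem_erase.mpr ⟨hav, h⟩) haσ
    refine KDecomposable.of_shed _ _ (e₀.erase v) hσmem hne hdim hshed ?_ ?_
    · rw [hdel]
      refine ihm (insert e₀ S) ?_ ?_
      · intro e hee
        rcases Finset.mem_insert.mp hee with rfl | hee
        · exact ⟨he₀, hve₀⟩
        · exact hS e hee
      · have hsd : (Set.toFinite {e | e ∈ D ∧ v ∈ e}).toFinset \ insert e₀ S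
            = ((Set.toFinite {e | e ∈ D ∧ v ∈ e}).toFinset \ S).erase e₀ := by
          ext a
          simp only [Finset.mem_sdiff, Finset.mem_erase, Finset.mem_insert]
          tauto
        have he₀TS : e₀ ∈ (Set.toFinite {e | e ∈ D ∧ v ∈ e}).toFinset \ S :=
          Finset.mem_sdiff.mpr ⟨(Set.Finite.mem_toFinset _).mpr ⟨he₀, hve₀⟩, he₀S⟩
        rw [hsd, Finset.card_erase_of_mem he₀TS]
        omega
    · rw [hlink]
      refine IH _ _ ?_ (isClutter_minimalSets _) ?_ ?_ ?_
      · calc ((W.erase v) \ e₀.erase v).card ≤ (W.erase v).card :=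
              Finset.card_le_card (Finset.sdiff_subset)
          _ < W.card := Finset.card_erase_lt_of_mem hv
      · rintro g ⟨⟨f, hf, rfl⟩, -⟩
        intro a ha
        obtain ⟨haf, haσ⟩ := Finset.mem_sdiff.mp ha
        exact Finset.mem_sdiff.mpr
          ⟨Finset.mem_erase.mpr ⟨fun h => hf.2 (h ▸ haf), hDW f hf.1 haf⟩, haσ⟩
      · exact chordal_minor hch
          (minor_sdiff hclut hv (e₀.erase v) (Finset.subset_erase.mpr ⟨hσW, hvσ⟩))
      · rintro g ⟨⟨f, hf, rfl⟩, -⟩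
        exact (Finset.card_le_card (Finset.sdiff_subset)).trans (hk f hf.1)

lemma out_main [Fintype ι] (k : ℕ) :
    ∀ (n : ℕ) (W : Finset ι) (D : Set (Finset ι)), W.card ≤ n → IsClutter D →
      (∀ e ∈ D, e ⊆ W) → Chordal W D → (∀ e ∈ D, e.card ≤ k) →
      KDecomposable ((k : ℤ) - 2) (indepOn W D) := by
  intro n
  induction n with
  | zero =>
    intro W D hcard hclut hDW hch hk
    have hW : W = ∅ := Finset.card_eq_zero.mp (Nat.le_zero.mp hcard)
    by_cases hemp0 : (∅ : Finset ι) ∈ D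
    · rw [indep_empty_of_empty_mem hemp0]; exact KDecomposable.of_empty _
    · subst hW
      rw [indep_ground_empty hemp0]
      exact KDecomposable.of_simplex _ ∅
  | succ n ih =>
    intro W D hcard hclut hDW hch hk
    by_cases hemp0 : (∅ : Finset ι) ∈ D
    · rw [indep_empty_of_empty_mem hemp0]; exact KDecomposable.of_empty _
    rcases Finset.eq_empty_or_nonempty W with hW | hW
    · subst hW
      rw [indep_ground_empty hemp0]
      exact KDecomposable.of_simplex _ ∅
    · obtain ⟨v, hvW, hsimp⟩ := hch W D (Minor.refl W D) hW
      by_cases hsing : ({v} : Finset ι) ∈ D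
      · rw [indep_del_singleton hvW hsing]
        refine ih (W.erase v) (clDel D v) ?_ (isClutter_clDel hclut v) ?_
          (chordal_minor hch (Minor.del v hvW (Minor.refl W D))) ?_
        · have h1 := Finset.card_erase_of_mem hvW
          omega
        · rintro e ⟨he, hve⟩
          exact Finset.subset_erase.mpr ⟨hDW e he, hve⟩
        · rintro e ⟨he, -⟩
          exact hk e he
      · have IH' : ∀ (W' : Finset ι) (D' : Set (Finset ι)), W'.card < W.card → IsClutter D' → (∀ e ∈ D', e ⊆ W') →
            Chordal W' D' → (∀ e ∈ D', e.card ≤ k) →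
            KDecomposable ((k : ℤ) - 2) (indepOn W' D') := by
          intro W' D' hlt
          exact ih W' D' (by omega)
        have hmain := inner_main hclut hDW hch hk hvW hsimp hsing hemp0 IH'
          ((Set.toFinite {e | e ∈ D ∧ v ∈ e}).toFinset).card ∅ (by simp) (by simp)
        have heq : {τ | τ ∈ indepOn W D ∧ ∀ e ∈ (∅ : Finset (Finset ι)), ¬ e.erase v ⊆ τ}
            = indepOn W D := by
          ext τ
          simp
        rwa [heq] at hmain

/-! ### k-decomposable implies shellable -/

lemma isComplex_delFace {Δ : Set (Finset ι)} (h : IsComplex Δ) (σ : Finset ι) :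
    IsComplex (delFace Δ σ) :=
  fun τ hτ ρ hρ => ⟨h τ hτ.1 ρ hρ, fun hσρ => hτ.2 (hσρ.trans hρ)⟩

lemma isComplex_link {Δ : Set (Finset ι)} (h : IsComplex Δ) (σ : Finset ι) :
    IsComplex (link Δ σ) :=
  fun τ hτ ρ hρ => ⟨Finset.disjoint_of_subset_left hρ hτ.1,
    h _ hτ.2 _ (Finset.union_subset_union hρ subset_rfl)⟩

lemma exists_facet_of_mem [Fintype ι] (Δ : Set (Finset ι)) {ρ : Finset ι} (hρ : ρ ∈ Δ) :
    ∃ τ, IsFacet Δ τ ∧ ρ ⊆ τ := by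
  have hfin : {τ | τ ∈ Δ ∧ ρ ⊆ τ}.Finite := Set.toFinite _
  have hne : hfin.toFinset.Nonempty := ⟨ρ, hfin.mem_toFinset.mpr ⟨hρ, subset_rfl⟩⟩
  obtain ⟨τ, hτ, hmax⟩ := hfin.toFinset.exists_max_image Finset.card hne
  rw [Set.Finite.mem_toFinset] at hτ
  refine ⟨τ, ⟨hτ.1, ?_⟩, hτ.2⟩
  intro γ hγ hsub
  exact Finset.eq_of_subset_of_card_le hsub
    (hmax γ (hfin.mem_toFinset.mpr ⟨hγ, hτ.2.trans hsub⟩))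

lemma facet_delFace {Δ : Set (Finset ι)} {σ τ : Finset ι}
    (hshed : SheddingFace Δ σ) (h : IsFacet (delFace Δ σ) τ) : IsFacet Δ τ := by
  obtain ⟨⟨hτΔ, hτσ⟩, hmax⟩ := h
  refine ⟨hτΔ, ?_⟩
  intro ρ hρ hsub
  by_cases hσρ : σ ⊆ ρ
  · obtain ⟨x, hxσ, hxτ⟩ := Finset.not_subset.mp hτσ
    obtain ⟨w, hwρ, hρ'⟩ := hshed ρ hρ hσρ x hxσ
    have hτρ' : τ ⊆ (insert w ρ).erase x :=
      fun a ha => Finset.mem_erase.mpr ⟨fun hh => hxτ (hh ▸ ha),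
        Finset.mem_insert_of_mem (hsub ha)⟩
    have hnσ : ¬ σ ⊆ (insert w ρ).erase x :=
      fun hs => (Finset.mem_erase.mp (hs hxσ)).1 rfl
    have heq := hmax _ ⟨hρ', hnσ⟩ hτρ'
    have hxρ : x ∈ insert w ρ := Finset.mem_insert_of_mem (hσρ hxσ)
    have hcard : ((insert w ρ).erase x).card = ρ.card := by
      rw [Finset.card_erase_of_mem hxρ, Finset.card_insert_of_notMem hwρ]
      omega
    exact Finset.eq_of_subset_of_card_le hsub (le_of_eq (by rw [heq, hcard]))
  · exact hmax ρ ⟨hρ, hσρ⟩ hsub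

lemma facet_link {Δ : Set (Finset ι)} {σ τ : Finset ι}
    (h : IsFacet (link Δ σ) τ) : IsFacet Δ (τ ∪ σ) := by
  obtain ⟨⟨hd, hu⟩, hmax⟩ := h
  refine ⟨hu, ?_⟩
  intro ρ hρ hsub
  have hσρ : σ ⊆ ρ := (Finset.subset_union_right).trans hsub
  have hρlink : ρ \ σ ∈ link Δ σ := by
    refine ⟨Finset.sdiff_disjoint, ?_⟩
    rwa [Finset.sdiff_union_of_subset hσρ]
  have hτsub : τ ⊆ ρ \ σ := fun a ha =>
    Finset.mem_sdiff.mpr ⟨hsub (Finset.mem_union_left σ ha), Finset.disjoint_left.mp hd ha⟩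
  have heq := hmax _ hρlink hτsub
  rw [heq, Finset.sdiff_union_of_subset hσρ]

lemma facet_to_link {Δ : Set (Finset ι)} {σ τ : Finset ι}
    (h : IsFacet Δ τ) (hs : σ ⊆ τ) : IsFacet (link Δ σ) (τ \ σ) := by
  refine ⟨⟨Finset.sdiff_disjoint, by rw [Finset.sdiff_union_of_subset hs]; exact h.1⟩, ?_⟩
  intro γ hγ hsub
  have h1 : τ ⊆ γ ∪ σ := by
    intro a ha
    by_cases haσ : a ∈ σ
    · exact Finset.mem_union_right γ haσ
    · exact Finset.mem_union_left σ (hsub (Finset.mem_sdiff.mpr ⟨ha, haσ⟩))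
  have h2 := h.2 _ hγ.2 h1
  rw [h2]
  ext a
  simp only [Finset.mem_sdiff, Finset.mem_union]
  constructor
  · rintro ⟨h3 | h3, h4⟩
    · exact h3
    · exact absurd h3 h4
  · intro h3
    exact ⟨Or.inl h3, Finset.disjoint_left.mp hγ.1 h3⟩

lemma facet_to_del {Δ : Set (Finset ι)} {σ τ : Finset ι}
    (h : IsFacet Δ τ) (hs : ¬ σ ⊆ τ) : IsFacet (delFace Δ σ) τ :=
  ⟨⟨h.1, hs⟩, fun ρ hρ hsub => h.2 ρ hρ.1 hsub⟩

lemma shellable_of_kdec [Fintype ι] {k : ℤ} :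
    ∀ {Δ : Set (Finset ι)}, KDecomposable k Δ → IsComplex Δ → Shellable Δ := by
  intro Δ h
  induction h with
  | of_empty =>
    intro _
    refine ⟨0, Fin.elim0, fun i => i.elim0, ?_, fun i => i.elim0⟩
    intro σ
    constructor
    · rintro ⟨h1, -⟩
      exact absurd h1 (Set.notMem_empty σ)
    · rintro ⟨i, -⟩
      exact i.elim0
  | of_simplex σ =>
    intro _
    refine ⟨1, fun _ => σ, fun i j _ => Subsingleton.elim i j, ?_, ?_⟩
    · intro τ
      constructor
      · rintro ⟨h1, h2⟩
        exact ⟨0, (h2 σ (Set.mem_setOf_eq ▸ Finset.Subset.refl σ) h1).symm⟩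
      · rintro ⟨i, rfl⟩
        exact ⟨Set.mem_setOf_eq ▸ Finset.Subset.refl σ, fun ρ hρ hsub => subset_antisymm hsub hρ⟩
    · intro i j hij
      have h1 := i.isLt
      have h2 := j.isLt
      have h3 := Fin.lt_def.mp hij
      omega
  | of_shed Δ σ hσΔ hne hdim hshed h₁ h₂ ih₁ ih₂ =>
    intro hc
    obtain ⟨m₁, f, finj, ffac, fsh⟩ := ih₁ (isComplex_delFace hc σ)
    obtain ⟨m₂, g, ginj, gfac, gsh⟩ := ih₂ (isComplex_link hc σ)
    have hffac : ∀ i, IsFacet (delFace Δ σ) (f i) := fun i => (ffac (f i)).mpr ⟨i, rfl⟩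
    have hgfac : ∀ j, IsFacet (link Δ σ) (g j) := fun j => (gfac (g j)).mpr ⟨j, rfl⟩
    have hgd : ∀ j, Disjoint (g j) σ := fun j => (hgfac j).1.1
    have hgu : ∀ j, (g j ∪ σ) ∈ Δ := fun j => (hgfac j).1.2
    have hfns : ∀ i, ¬ σ ⊆ f i := fun i => (hffac i).1.2
    have hgcancel : ∀ j, (g j ∪ σ) \ σ = g j := by
      intro j; ext a
      simp only [Finset.mem_sdiff, Finset.mem_union]
      constructor
      · rintro ⟨h1 | h1, h2⟩
        · exact h1
        · exact absurd h1 h2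
      · intro h1
        exact ⟨Or.inl h1, Finset.disjoint_left.mp (hgd j) h1⟩
    set F : Fin (m₁ + m₂) → Finset ι :=
      fun i => if h : (i : ℕ) < m₁ then f ⟨i, h⟩
        else g ⟨(i : ℕ) - m₁, by have := i.isLt; omega⟩ ∪ σ with hF
    have hFlt : ∀ (i : Fin (m₁ + m₂)) (h : (i : ℕ) < m₁), F i = f ⟨i, h⟩ := by
      intro i h
      simp only [hF]
      rw [dif_pos h]
    have hFge : ∀ (i : Fin (m₁ + m₂)) (h : ¬ (i : ℕ) < m₁),
        F i = g ⟨(i : ℕ) - m₁, by have := i.isLt; omega⟩ ∪ σ := by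
      intro i h
      simp only [hF]
      rw [dif_neg h]
    refine ⟨m₁ + m₂, F, ?_, ?_, ?_⟩
    · -- injectivity
      intro i j heq
      by_cases hi : (i : ℕ) < m₁ <;> by_cases hj : (j : ℕ) < m₁
      · rw [hFlt i hi, hFlt j hj] at heq
        have h1 := congrArg Fin.val (finj heq)
        simp only at h1
        exact Fin.ext h1
      · rw [hFlt i hi, hFge j hj] at heq
        exact absurd (heq.symm ▸ Finset.subset_union_right) (hfns ⟨i, hi⟩)
      · rw [hFge i hi, hFlt j hj] at heq
        exact absurd (heq ▸ Finset.subset_union_right) (hfns ⟨j, hj⟩)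
      · rw [hFge i hi, hFge j hj] at heq
        have h1 := congrArg (· \ σ) heq
        simp only [hgcancel] at h1
        have h2 := congrArg Fin.val (ginj h1)
        simp only at h2
        have hi' := i.isLt
        have hj' := j.isLt
        exact Fin.ext (by omega)
    · -- facet enumeration
      intro τ
      constructor
      · intro hfacet
        by_cases hστ : σ ⊆ τ
        · obtain ⟨j, hj⟩ := (gfac (τ \ σ)).mp (facet_to_link hfacet hστ)
          refine ⟨⟨m₁ + (j : ℕ), by have := j.isLt; omega⟩, ?_⟩
          have hF1 : F ⟨m₁ + (j : ℕ), by have := j.isLt; omega⟩ = g j ∪ σ := by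
            rw [hFge _ (show ¬ (m₁ + (j : ℕ) < m₁) by omega)]
            congr 2
            exact Fin.ext (show m₁ + (j : ℕ) - m₁ = (j : ℕ) by omega)
          rw [hF1, hj]
          exact Finset.sdiff_union_of_subset hστ
        · obtain ⟨i, hi⟩ := (ffac τ).mp (facet_to_del hfacet hστ)
          refine ⟨⟨(i : ℕ), by have := i.isLt; omega⟩, ?_⟩
          have hF1 : F ⟨(i : ℕ), by have := i.isLt; omega⟩ = f i := by
            rw [hFlt _ (show ((i : ℕ)) < m₁ from i.isLt)]
          rw [hF1]
          exact hi
      · rintro ⟨i, rfl⟩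
        by_cases hi : (i : ℕ) < m₁
        · rw [hFlt i hi]
          exact facet_delFace hshed (hffac _)
        · rw [hFge i hi]
          exact facet_link (hgfac _)
    · -- shelling condition
      intro i j hij
      have hij' : (i : ℕ) < (j : ℕ) := Fin.lt_def.mp hij
      by_cases hj : (j : ℕ) < m₁
      · -- both in the first block
        have hi : (i : ℕ) < m₁ := by omega
        obtain ⟨K, hK, x, hx, hsub, heqq⟩ :=
          fsh ⟨(i : ℕ), hi⟩ ⟨(j : ℕ), hj⟩ (Fin.lt_def.mpr hij')
        have hKlt := K.isLt
        set K' : Fin (m₁ + m₂) := ⟨(K : ℕ), by omega⟩ with hK'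
        have hFK : F K' = f K := by
          rw [hFlt K' (show ((K' : ℕ)) < m₁ from K.isLt)]
        refine ⟨K', Fin.lt_def.mpr (show ((K' : ℕ)) < (j : ℕ) from Fin.lt_def.mp hK), x, ?_, ?_, ?_⟩
        · rw [hFlt j hj]; exact hx
        · rw [hFlt i hi, hFlt j hj, hFK]; exact hsub
        · rw [hFlt j hj, hFK]; exact heqq
      · by_cases hi : (i : ℕ) < m₁
        · -- cross case
          set j₂ : Fin m₂ := ⟨(j : ℕ) - m₁, by have := j.isLt; omega⟩ with hj₂
          have hFj : F j = g j₂ ∪ σ := hFge j hj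
          have hFi : F i = f ⟨(i : ℕ), hi⟩ := hFlt i hi
          obtain ⟨x, hxσ, hxfi⟩ := Finset.not_subset.mp (hfns ⟨(i : ℕ), hi⟩)
          obtain ⟨w, hw, hρ⟩ := hshed (g j₂ ∪ σ) (hgu j₂) Finset.subset_union_right x hxσ
          have hρdel : (insert w (g j₂ ∪ σ)).erase x ∈ delFace Δ σ := by
            refine ⟨hρ, fun hs => ?_⟩
            exact (Finset.mem_erase.mp (hs hxσ)).1 rfl
          obtain ⟨τ, hτfac, hρτ⟩ := exists_facet_of_mem _ hρdel
          obtain ⟨K, hK⟩ := (ffac τ).mp hτfac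
          have hxτ : x ∉ τ := by
            intro hxτ
            apply hτfac.1.2
            intro a ha
            by_cases hax : a = x
            · exact hax ▸ hxτ
            · exact hρτ (Finset.mem_erase.mpr
                ⟨hax, Finset.mem_insert_of_mem (Finset.mem_union_right _ ha)⟩)
          have hinter : τ ∩ (g j₂ ∪ σ) = (g j₂ ∪ σ).erase x := by
            ext a
            simp only [Finset.mem_inter, Finset.mem_erase]
            constructor
            · rintro ⟨h1, h2⟩
              exact ⟨fun hh => hxτ (hh ▸ h1), h2⟩
            · rintro ⟨h1, h2⟩
              exact ⟨hρτ (Finset.mem_erase.mpr ⟨h1, Finset.mem_insert_of_mem h2⟩), h2⟩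
          have hKlt := K.isLt
          set K' : Fin (m₁ + m₂) := ⟨(K : ℕ), by omega⟩ with hK'
          have hFK : F K' = τ := by
            rw [hFlt K' (show ((K' : ℕ)) < m₁ from K.isLt)]
            rw [← hK]
          refine ⟨K', Fin.lt_def.mpr (show ((K : ℕ)) < (j : ℕ) by omega), x, ?_, ?_, ?_⟩
          · rw [hFj]; exact Finset.mem_union_right _ hxσ
          · rw [hFi, hFj, hFK, hinter]
            intro a ha
            obtain ⟨ha1, ha2⟩ := Finset.mem_inter.mp ha
            exact Finset.mem_erase.mpr ⟨fun hh => hxfi (hh ▸ ha1), ha2⟩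
          · rw [hFj, hFK]
            exact hinter
        · -- both in the second block
          set i₂ : Fin m₂ := ⟨(i : ℕ) - m₁, by have := i.isLt; omega⟩ with hi₂
          set j₂ : Fin m₂ := ⟨(j : ℕ) - m₁, by have := j.isLt; omega⟩ with hj₂
          have hFi : F i = g i₂ ∪ σ := hFge i hi
          have hFj : F j = g j₂ ∪ σ := hFge j hj
          obtain ⟨K, hK, x, hx, hsub, heqq⟩ :=
            gsh i₂ j₂ (Fin.lt_def.mpr (show (i : ℕ) - m₁ < (j : ℕ) - m₁ by omega))
          have hKlt := K.isLt
          have hKj := Fin.lt_def.mp hK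
          set K' : Fin (m₁ + m₂) := ⟨m₁ + (K : ℕ), by omega⟩ with hK'
          have hFK : F K' = g K ∪ σ := by
            rw [hFge K' (show ¬ ((K' : ℕ)) < m₁ by show ¬ (m₁ + (K : ℕ) < m₁); omega)]
            congr 2
            exact Fin.ext (show m₁ + (K : ℕ) - m₁ = (K : ℕ) by omega)
          have hxσn : x ∉ σ := Finset.disjoint_left.mp (hgd j₂) hx
          refine ⟨K', Fin.lt_def.mpr (show m₁ + (K : ℕ) < (j : ℕ) by
            simp only [hj₂] at hKj; omega), x, ?_, ?_, ?_⟩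
          · rw [hFj]; exact Finset.mem_union_left σ hx
          · rw [hFi, hFj, hFK]
            intro a ha
            simp only [Finset.mem_inter, Finset.mem_union] at ha ⊢
            obtain ⟨ha1, ha2⟩ := ha
            rcases ha1 with h1 | h1
            · rcases ha2 with h2 | h2
              · have h3 := Finset.mem_inter.mp (hsub (Finset.mem_inter.mpr ⟨h1, h2⟩))
                exact ⟨Or.inl h3.1, Or.inl h3.2⟩
              · exact ⟨Or.inr h2, Or.inr h2⟩
            · exact ⟨Or.inr h1, ha2⟩
          · rw [hFj, hFK]
            ext a
            simp only [Finset.mem_inter, Finset.mem_union, Finset.mem_erase]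
            constructor
            · rintro ⟨h1 | h1, h2 | h2⟩
              · have h3 : a ∈ (g j₂).erase x := heqq ▸ Finset.mem_inter.mpr ⟨h1, h2⟩
                exact ⟨(Finset.mem_erase.mp h3).1, Or.inl h2⟩
              · exact ⟨fun hh => hxσn (hh ▸ h2), Or.inr h2⟩
              · exact ⟨fun hh => hxσn (hh ▸ h1), Or.inr h1⟩
              · exact ⟨fun hh => hxσn (hh ▸ h1), Or.inr h1⟩
            · rintro ⟨h1, h2 | h2⟩
              · have h3 : a ∈ g K ∩ g j₂ := heqq.symm ▸ Finset.mem_erase.mpr ⟨h1, h2⟩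
                obtain ⟨h4, h5⟩ := Finset.mem_inter.mp h3
                exact ⟨Or.inl h4, Or.inl h5⟩
              · exact ⟨Or.inr h2, Or.inr h2⟩

/-- the independence complex of a chordal clutter with maximum
circuit cardinality `k` is `(k-2)`-decomposable, hence shellable. -/
theorem stmt14 [Fintype ι] (V : Finset ι) (C : Set (Finset ι))
    (hC : IsClutter C) (hCV : ∀ e ∈ C, e ⊆ V)
    (hch : Chordal V C) (k : ℕ)
    (hk₁ : ∀ e ∈ C, e.card ≤ k) (hk₂ : ∃ e ∈ C, e.card = k) :
    KDecomposable ((k : ℤ) - 2) (indepOn V C) ∧ Shellable (indepOn V C) := by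
  have h1 : KDecomposable ((k : ℤ) - 2) (indepOn V C) :=
    out_main k V.card V C le_rfl hC hCV hch hk₁
  exact ⟨h1, shellable_of_kdec h1 (isComplex_indepOn V C)⟩
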